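/- arXiv:0803.2160 — 6 statements merged into one kernel-verified Lean document; each statement's English description precedes it below -/
import Mathlib

section
/- Let s ≥ 1 be an integer and let t₁, q₁,…,q_s, Q₁,…,Q_s be real numbers with 0 < t₁ ≤ q_s < … < q₁ < Q₁ < … < Q_s and S = Σ_{i=1}^s (Q_i − q_i) < Q₁. Then (Q₁⋯Q_s)/(q₁⋯q_s) ≤ Q_s/(Q_s − S) < Q_{s-1}/(Q_{s-1} − S) < … < Q₁/(Q₁ − S), with the first inequality strict when s ≥ 2. -/
open Finset

lemma prod_ratio_aux (f g : ℕ → ℝ) :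
    ∀ n : ℕ, 1 ≤ n →
    (∀ k < n, 0 < g k) → (∀ k < n, g k < f k) →
    (∀ k, 1 ≤ k → k < n → g 0 < f k) →
    0 < f 0 - ∑ k ∈ Finset.range n, (f k - g k) →
    ((∏ k ∈ Finset.range n, f k) / (∏ k ∈ Finset.range n, g k)
      ≤ f 0 / (f 0 - ∑ k ∈ Finset.range n, (f k - g k)) ∧
    (2 ≤ n → (∏ k ∈ Finset.range n, f k) / (∏ k ∈ Finset.range n, g k)
      < f 0 / (f 0 - ∑ k ∈ Finset.range n, (f k - g k)))) := by
  intro n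
  induction n with
  | zero => omega
  | succ n ih =>
    intro hn hg hgf hgh hpos
    rcases Nat.lt_or_ge n 1 with h1 | h1
    · interval_cases n
      have e : (0:ℕ) + 1 = 1 := rfl
      rw [e, Finset.prod_range_one, Finset.prod_range_one, Finset.sum_range_one,
        show f 0 - (f 0 - g 0) = g 0 by ring]
      exact ⟨le_refl _, by omega⟩
    · set T := ∑ k ∈ Finset.range n, (f k - g k) with hT
      have hsum : ∑ k ∈ Finset.range (n+1), (f k - g k) = T + (f n - g n) :=
        Finset.sum_range_succ _ n
      rw [hsum] at hpos ⊢
      have hdn : 0 < f n - g n := sub_pos.mpr (hgf n (by omega))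
      have hposT : 0 < f 0 - T := by linarith
      have hTge : f 0 - g 0 ≤ T := by
        refine Finset.single_le_sum (f := fun k => f k - g k)
          (fun k hk => le_of_lt (sub_pos.mpr (hgf k ?_))) (Finset.mem_range.mpr (by omega))
        have := Finset.mem_range.mp hk; omega
      have hg0 := hg 0 (by omega)
      have hga : g 0 < f n := hgh n h1 (by omega)
      have hgn := hg n (by omega)
      have hfn : g n < f n := hgf n (by omega)
      have hf0 : g 0 < f 0 := hgf 0 (by omega)
      obtain ⟨ihle, _⟩ := ih h1 (fun k hk => hg k (by omega)) (fun k hk => hgf k (by omega))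
        (fun k h1k hk => hgh k h1k (by omega)) hposT
      have key : (f 0 / (f 0 - T)) * (f n / g n) < f 0 / (f 0 - T - (f n - g n)) := by
        rw [div_mul_div_comm, div_lt_div_iff₀ (mul_pos hposT hgn) (by linarith)]
        have hX : f 0 - T < f n := by linarith
        have hXpos : 0 < f 0 := by linarith
        nlinarith [mul_pos hXpos (mul_pos (sub_pos.mpr hfn) (sub_pos.mpr hX))]
      have hstep : (∏ k ∈ Finset.range (n+1), f k) / (∏ k ∈ Finset.range (n+1), g k)
          < f 0 / (f 0 - (T + (f n - g n))) := by
        rw [Finset.prod_range_succ, Finset.prod_range_succ, ← div_mul_div_comm]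
        calc (∏ k ∈ Finset.range n, f k) / (∏ k ∈ Finset.range n, g k) * (f n / g n)
            ≤ (f 0 / (f 0 - T)) * (f n / g n) :=
              mul_le_mul_of_nonneg_right ihle (div_pos (hgn.trans hfn) hgn).le
          _ < f 0 / (f 0 - T - (f n - g n)) := key
          _ = f 0 / (f 0 - (T + (f n - g n))) := by ring_nf
      exact ⟨le_of_lt hstep, fun _ => hstep⟩

theorem prod_ratio_bounds (s : ℕ) (hs : 1 ≤ s) (t₁ : ℝ) (q Q : Fin s → ℝ)
    (ht : 0 < t₁) (hq : ∀ i, t₁ ≤ q i) (hqa : StrictAnti q) (hQ : StrictMono Q)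
    (hqQ : ∀ i j, q i < Q j)
    (hS : (∑ k, (Q k - q k)) < Q ⟨0, by omega⟩) :
    ((∏ i, Q i) / (∏ i, q i) ≤
        Q ⟨s - 1, by omega⟩ / (Q ⟨s - 1, by omega⟩ - ∑ k, (Q k - q k))) ∧
    (2 ≤ s → (∏ i, Q i) / (∏ i, q i) <
        Q ⟨s - 1, by omega⟩ / (Q ⟨s - 1, by omega⟩ - ∑ k, (Q k - q k))) ∧
    (∀ i j : Fin s, i < j →
        Q j / (Q j - ∑ k, (Q k - q k)) < Q i / (Q i - ∑ k, (Q k - q k))) := by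
  have hS0 : 0 < ∑ k, (Q k - q k) :=
    Finset.sum_pos (fun k _ => sub_pos.mpr (hqQ k k)) ⟨⟨0, by omega⟩, Finset.mem_univ _⟩
  have hQle : ∀ i : Fin s, ∑ k, (Q k - q k) < Q i := by
    intro i
    refine lt_of_lt_of_le hS (hQ.monotone ?_)
    rw [Fin.le_def]
    exact Nat.zero_le _
  -- set up reindexed functions
  set F : ℕ → ℝ := fun k => if h : k < s then Q ⟨k, h⟩ else 1 with hF
  set G : ℕ → ℝ := fun k => if h : k < s then q ⟨k, h⟩ else 1 with hG
  set f : ℕ → ℝ := fun k => F (s - 1 - k) with hf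
  set g : ℕ → ℝ := fun k => G (s - 1 - k) with hg'
  have hfk : ∀ k, k < s → f k = Q ⟨s - 1 - k, by omega⟩ := by
    intro k hk
    simp only [hf, hF]
    rw [dif_pos (by omega : s - 1 - k < s)]
  have hgk : ∀ k, k < s → g k = q ⟨s - 1 - k, by omega⟩ := by
    intro k hk
    simp only [hg', hG]
    rw [dif_pos (by omega : s - 1 - k < s)]
  have e1 : ∏ k ∈ Finset.range s, f k = ∏ i, Q i := by
    rw [show (∏ k ∈ Finset.range s, f k) = ∏ k ∈ Finset.range s, F (s - 1 - k) from rfl,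
      Finset.prod_range_reflect, ← Fin.prod_univ_eq_prod_range F s]
    exact Finset.prod_congr rfl (fun i _ => by simp [hF, i.isLt])
  have e2 : ∏ k ∈ Finset.range s, g k = ∏ i, q i := by
    rw [show (∏ k ∈ Finset.range s, g k) = ∏ k ∈ Finset.range s, G (s - 1 - k) from rfl,
      Finset.prod_range_reflect, ← Fin.prod_univ_eq_prod_range G s]
    exact Finset.prod_congr rfl (fun i _ => by simp [hG, i.isLt])
  have e3 : ∑ k ∈ Finset.range s, (f k - g k) = ∑ k, (Q k - q k) := by
    have h := Finset.sum_range_reflect (fun j => F j - G j) s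
    have h2 : ∑ j ∈ Finset.range s, (F j - G j) = ∑ k, (Q k - q k) := by
      rw [← Fin.sum_univ_eq_sum_range (fun j => F j - G j) s]
      exact Finset.sum_congr rfl (fun i _ => by simp [hF, hG, i.isLt])
    exact h.trans h2
  have e0 : f 0 = Q ⟨s - 1, by omega⟩ := by
    rw [hfk 0 (by omega)]
    rfl
  obtain ⟨h1, h2⟩ := prod_ratio_aux f g s hs
    (fun k hk => by rw [hgk k hk]; exact lt_of_lt_of_le ht (hq _))
    (fun k hk => by rw [hgk k hk, hfk k hk]; exact hqQ _ _)
    (fun k h1k hk => by rw [hgk 0 (by omega), hfk k hk]; exact hqQ _ _)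
    (by rw [e3, e0]; linarith [hQle ⟨s - 1, by omega⟩])
  rw [e1, e2, e3, e0] at h1 h2
  refine ⟨h1, h2, ?_⟩
  intro i j hij
  have hi := hQle i
  have hj := hQle j
  rw [div_lt_div_iff₀ (by linarith) (by linarith)]
  nlinarith [mul_pos hS0 (sub_pos.mpr (hQ hij))]
end

section
/- For x ≥ 80, the real number y = y(x) > 1 defined by (y² − y)/log y = x/log x satisfies y(x) ≤ √(x/2). -/
/-!
Writing `s = √(x/2)`, so that `x = 2s²`, the inequality `x / log x ≤ (s² - s) / log s` unfolds to
`2 log s ≤ (s - 1) log 2`, i.e. `s² ≤ 2^(s-1)`, which holds for `s ≥ √40`. Since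
`t ↦ (t² - t) / log t` is strictly increasing on `(1, ∞)` and takes the value `x / log x` at `y`,
this forces `y ≤ s`. The threshold is nearly sharp: `2^(√40 - 1) ≈ 40.07`.
-/

open Real Set

lemma strictMonoOn_sq_sub_self_div_log :
    StrictMonoOn (fun t : ℝ => (t ^ 2 - t) / log t) (Ioi 1) := by
  have hasDeriv : ∀ t ∈ Ioi (1 : ℝ), HasDerivAt (fun t : ℝ => (t ^ 2 - t) / log t)
      (((2 * t - 1) * log t - (t ^ 2 - t) * t⁻¹) / log t ^ 2) t := by
    intro t (ht : 1 < t)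
    have hpoly : HasDerivAt (fun t : ℝ => t ^ 2 - t) (2 * t - 1) t := by
      simpa using (hasDerivAt_pow 2 t).fun_sub (hasDerivAt_id' t)
    exact hpoly.div (hasDerivAt_log (by positivity)) (log_pos ht).ne'
  refine strictMonoOn_of_deriv_pos (convex_Ioi 1)
    (fun t ht => (hasDeriv t ht).continuousAt.continuousWithinAt) fun t ht => ?_
  rw [interior_Ioi] at ht
  have ht1 : 1 < t := ht
  rw [(hasDeriv t ht).deriv]
  refine div_pos ?_ (pow_pos (log_pos ht1) 2)
  have hlog : (2 * t - 1) * (1 - t⁻¹) ≤ (2 * t - 1) * log t :=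
    mul_le_mul_of_nonneg_left (one_sub_inv_le_log_of_pos (by positivity)) (by linarith)
  have hident : (2 * t - 1) * (1 - t⁻¹) - (t ^ 2 - t) * t⁻¹ = (t - 1) ^ 2 / t := by
    field_simp
    ring
  have hsq : 0 < (t - 1) ^ 2 / t := div_pos (pow_pos (by linarith) 2) (by linarith)
  linarith

lemma log_five_div_four_le : log (5 / 4) ≤ 0.2245 := by
  rw [log_le_iff_le_exp (by norm_num)]
  calc (5 / 4 : ℝ) ≤ (0.2245 / 32 + 1) ^ 32 := by norm_num
    _ ≤ exp (0.2245 / 32) ^ 32 := by gcongr; exact add_one_le_exp _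
    _ = exp 0.2245 := by rw [← exp_nat_mul]; norm_num

lemma log_forty_le : log 40 ≤ (√40 - 1) * log 2 := by
  have hsqrt : (6.3245 : ℝ) ≤ √40 := by rw [le_sqrt (by norm_num) (by norm_num)]; norm_num
  have hlog40 : log 40 = 5 * log 2 + log (5 / 4) := by
    rw [show (40 : ℝ) = 2 ^ 5 * (5 / 4) by norm_num, log_mul (by norm_num) (by norm_num),
      log_pow]
    push_cast
    ring
  nlinarith [log_five_div_four_le, log_two_gt_d9]

lemma two_mul_log_le_sub_one_mul_log_two {s : ℝ} (hs : √40 ≤ s) :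
    2 * log s ≤ (s - 1) * log 2 := by
  set a := √40
  have ha : 6 ≤ a := by rw [le_sqrt (by norm_num) (by norm_num)]; norm_num
  have ha0 : 0 < a := by linarith
  -- tangent line of the concave `log` at `a`, whose slope `2 / a` is at most `log 2`
  have htangent : log s ≤ log a + (s - a) / a := by
    have := log_le_sub_one_of_pos (div_pos (ha0.trans_le hs) ha0)
    rw [log_div (ha0.trans_le hs).ne' ha0.ne', div_sub_one ha0.ne'] at this
    linarith
  have hslope : 2 / a ≤ log 2 := by
    rw [div_le_iff₀ ha0]
    nlinarith [log_two_gt_d9]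
  have hloga : 2 * log a = log 40 := by
    rw [log_sqrt (by norm_num)]
    ring
  have hstep : 2 * ((s - a) / a) ≤ (s - a) * log 2 := by
    rw [show 2 * ((s - a) / a) = (s - a) * (2 / a) by ring]
    exact mul_le_mul_of_nonneg_left hslope (by linarith)
  linarith [log_forty_le]

lemma div_log_le_sq_sub_self_div_log {s : ℝ} (hs : 1 < s) (h : 2 * log s ≤ (s - 1) * log 2) :
    2 * s ^ 2 / log (2 * s ^ 2) ≤ (s ^ 2 - s) / log s := by
  have hlogs : 0 < log s := log_pos hs
  have hlog : log (2 * s ^ 2) = log 2 + 2 * log s := by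
    rw [log_mul two_ne_zero (by positivity), log_pow]
    push_cast
    ring
  rw [hlog, div_le_div_iff₀ (by positivity) hlogs]
  nlinarith

theorem y_le_sqrt_half (x y : ℝ) (hx : 80 ≤ x) (hy : 1 < y)
    (h : (y ^ 2 - y) / Real.log y = x / Real.log x) :
    y ≤ Real.sqrt (x / 2) := by
  set s := √(x / 2)
  have hx_eq : x = 2 * s ^ 2 := by rw [sq_sqrt (by linarith)]; ring
  have hs : √40 ≤ s := sqrt_le_sqrt (by linarith)
  have hs1 : 1 < s := lt_of_lt_of_le (by rw [lt_sqrt zero_le_one]; norm_num) hs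
  rw [← strictMonoOn_sq_sub_self_div_log.le_iff_le hy hs1]
  calc (y ^ 2 - y) / log y = 2 * s ^ 2 / log (2 * s ^ 2) := by rw [h, hx_eq]
    _ ≤ (s ^ 2 - s) / log s :=
      div_log_le_sq_sub_self_div_log hs1 (two_mul_log_le_sub_one_mul_log_two hs)
end

section
/- If N is an ℓ-superchampion number, then N = g(ℓ(N)). -/
/-- ℓ(M): the sum of the prime powers in the standard factorization of M. -/
def ell (M : ℕ) : ℕ := ∑ p ∈ M.primeFactors, p ^ M.factorization p

theorem le_of_sub_mul_log_le_of_le {a b x y ρ : ℝ} (hρ : 0 < ρ) (hx : 0 < x) (hy : 0 < y)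
    (h : a - ρ * Real.log x ≤ b - ρ * Real.log y) (hba : b ≤ a) : y ≤ x := by
  have hlog : Real.log y ≤ Real.log x := le_of_mul_le_mul_left (by linarith) hρ
  exact (Real.log_le_log_iff hy hx).mp hlog

theorem superchampion_eq_landau (N : ℕ) (hN : 0 < N)
    (h : ∃ ρ : ℝ, 0 < ρ ∧ ∀ M : ℕ, 0 < M →
      (ell N : ℝ) - ρ * Real.log N ≤ (ell M : ℝ) - ρ * Real.log M) :
    IsGreatest {M : ℕ | 0 < M ∧ ell M ≤ ell N} N := by
  obtain ⟨ρ, hρ, hmin⟩ := h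
  refine ⟨⟨hN, le_rfl⟩, fun M ⟨hM, hle⟩ => ?_⟩
  exact_mod_cast le_of_sub_mul_log_le_of_le hρ (Nat.cast_pos.mpr hN) (Nat.cast_pos.mpr hM)
    (hmin M hM) (by exact_mod_cast hle)
end

section
/- Let ρ > 0 with ρ ∉ ⋃_p { p/log p, (p²−p)/log p, (p³−p²)/log p, … } (union over primes p). Then there is a unique positive integer N minimizing ℓ(M) − ρ log M over all positive integers M, and N = ∏_{p : p/log p < ρ} p^{α_p}, where α_p = 1 if p/log p < ρ ≤ (p²−p)/log p and α_p = i if (p^i − p^{i−1})/log p < ρ ≤ (p^{i+1} − p^i)/log p for i ≥ 2. -/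
open Finset Real Filter

theorem sum_range_lt_sum_range_of_neg_of_pos {M : Type*} [AddCommMonoid M] [PartialOrder M]
    [IsOrderedCancelAddMonoid M] {d : ℕ → M} {α : ℕ} (hneg : ∀ j < α, d j < 0)
    (hpos : ∀ j, α ≤ j → 0 < d j) {a : ℕ} (ha : a ≠ α) :
    ∑ j ∈ range α, d j < ∑ j ∈ range a, d j := by
  rcases ha.lt_or_gt with ha | ha
  · rw [← sum_range_add_sum_Ico d ha.le]
    refine add_lt_of_neg_right _ (sum_neg (fun j hj => hneg j (mem_Ico.1 hj).2) ?_)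
    exact ⟨a, mem_Ico.2 ⟨le_rfl, ha⟩⟩
  · rw [← sum_range_add_sum_Ico d ha.le]
    refine lt_add_of_pos_right _ (sum_pos (fun j hj => hpos j (mem_Ico.1 hj).1) ?_)
    exact ⟨α, mem_Ico.2 ⟨le_rfl, ha⟩⟩

theorem Monotone.exists_lt_iff_lt {β : Type*} [LinearOrder β] {d : ℕ → β} (hd : Monotone d)
    {t : β} (ht : ∃ a, t ≤ d a) : ∃ α, ∀ j, d j < t ↔ j < α := by
  classical
  refine ⟨Nat.find ht, fun j => ⟨fun hj => ?_, fun hj => ?_⟩⟩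
  · exact Nat.lt_find_iff ht j |>.2 fun m hm => not_le.2 ((hd hm).trans_lt hj)
  · exact not_le.1 (Nat.find_min ht hj)

theorem Nat.exists_factorization_eq {f : ℕ → ℕ} (hf : {p | p.Prime ∧ f p ≠ 0}.Finite) :
    ∃ N ≠ 0, ∀ p, p.Prime → N.factorization p = f p := by
  classical
  let g : ℕ →₀ ℕ := Finsupp.ofSupportFinite (fun p => if p.Prime then f p else 0)
    (hf.subset fun p hp => by by_cases h : p.Prime <;> simp_all)
  have hg : ∀ p ∈ g.support, p.Prime := fun p hp => by
    by_contra h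
    simp [g, Finsupp.ofSupportFinite_coe, h] at hp
  refine ⟨g.prod (· ^ ·), ?_, fun p hp => ?_⟩
  · exact (prod_pos fun p hp => pow_pos (hg p hp).pos _).ne'
  · rw [Nat.prod_pow_factorization_eq_self hg]
    simp [g, Finsupp.ofSupportFinite_coe, hp]

theorem sum_lt_sum_of_factorization_ne {β : Type*} [AddCommMonoid β] [PartialOrder β]
    [IsOrderedCancelAddMonoid β] {M N : ℕ} (hM : M ≠ 0) (hN : N ≠ 0) (hMN : M ≠ N)
    {g : ℕ → ℕ → β}
    (hg : ∀ p, p.Prime → ∀ a ≠ N.factorization p, g p (N.factorization p) < g p a) :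
    ∑ p ∈ M.primeFactors ∪ N.primeFactors, g p (N.factorization p) <
      ∑ p ∈ M.primeFactors ∪ N.primeFactors, g p (M.factorization p) := by
  obtain ⟨q, hq⟩ : ∃ q, M.factorization q ≠ N.factorization q := by
    by_contra! h
    exact hMN (Nat.factorization_inj hM hN (Finsupp.ext h))
  have hqS : q ∈ M.primeFactors ∪ N.primeFactors := by
    by_contra h
    simp only [mem_union, not_or, ← Nat.support_factorization, Finsupp.notMem_support_iff] at h
    exact hq (h.1.trans h.2.symm)
  have hprime : ∀ p ∈ M.primeFactors ∪ N.primeFactors, p.Prime := fun p hp => by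
    rcases mem_union.1 hp with hp | hp <;> exact Nat.prime_of_mem_primeFactors hp
  refine sum_lt_sum (fun p hp => ?_) ⟨q, hqS, hg q (hprime q hqS) _ hq⟩
  rcases eq_or_ne (M.factorization p) (N.factorization p) with h | h
  · rw [h]
  · exact (hg p (hprime p hp) _ h).le

theorem finite_setOf_lt_mul_log (ρ : ℝ) : {n : ℕ | (n : ℝ) < ρ * log n}.Finite := by
  have h : ∀ᶠ x : ℝ in atTop, ρ * log x ≤ x := by
    filter_upwards [(isLittleO_log_id_atTop.const_mul_left ρ).bound one_pos, eventually_ge_atTop 0]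
      with x hx hx0
    simpa [abs_of_nonneg hx0] using (le_abs_self _).trans hx
  simpa [← Nat.cofinite_eq_atTop] using tendsto_natCast_atTop_atTop.eventually h

/-- `ellIncr p a = ℓ(p^(a+1)) - ℓ(p^a)` (recall `ℓ(1) = 0`), so that
`E_p = {ellIncr p a / log p | a}`. -/
noncomputable def ellIncr (x : ℝ) (a : ℕ) : ℝ := if a = 0 then x else x ^ (a + 1) - x ^ a

theorem sum_range_ellIncr (x : ℝ) {a : ℕ} (ha : a ≠ 0) : ∑ j ∈ range a, ellIncr x j = x ^ a := by
  obtain ⟨n, rfl⟩ := Nat.exists_eq_add_one_of_ne_zero ha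
  induction n with
  | zero => simp [ellIncr]
  | succ n ih => rw [sum_range_succ, ih n.succ_ne_zero, ellIncr, if_neg n.succ_ne_zero]; ring

theorem pow_le_ellIncr {x : ℝ} (hx : 2 ≤ x) (a : ℕ) : x ^ a ≤ ellIncr x a := by
  rcases eq_or_ne a 0 with rfl | ha
  · simp only [ellIncr, pow_zero, if_true]; linarith
  · rw [ellIncr, if_neg ha, pow_succ]
    nlinarith [pow_pos (by linarith : (0 : ℝ) < x) a]

theorem monotone_ellIncr {x : ℝ} (hx : 2 ≤ x) : Monotone (ellIncr x) := by
  refine monotone_nat_of_le_succ fun a => ?_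
  rcases eq_or_ne a 0 with rfl | ha
  · rw [ellIncr, ellIncr, if_pos rfl, if_neg (zero_add 1 ▸ one_ne_zero), zero_add, pow_one,
      pow_succ, pow_one]
    nlinarith
  · rw [ellIncr, ellIncr, if_neg ha, if_neg a.succ_ne_zero, pow_succ x (a + 1), pow_succ x a]
    nlinarith [mul_nonneg (pow_nonneg (by linarith : (0 : ℝ) ≤ x) a) (sq_nonneg (x - 1))]

theorem exists_le_ellIncr {x : ℝ} (hx : 2 ≤ x) (t : ℝ) : ∃ a, t ≤ ellIncr x a := by
  obtain ⟨a, ha⟩ := pow_unbounded_of_one_lt t (by linarith : (1 : ℝ) < x)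
  exact ⟨a, ha.le.trans (pow_le_ellIncr hx a)⟩

theorem ellIncr_ne_mul_log {p : ℕ} (hp : p.Prime) {ρ : ℝ} (h0 : ρ ≠ p / log p)
    (h : ∀ i, 1 ≤ i → ρ ≠ ((p : ℝ) ^ (i + 1) - (p : ℝ) ^ i) / log p) (j : ℕ) :
    ellIncr p j ≠ ρ * log p := by
  have hlog : log p ≠ 0 := (log_pos (by exact_mod_cast hp.one_lt)).ne'
  intro heq
  rcases eq_or_ne j 0 with rfl | hj
  · exact h0 (by rw [eq_div_iff hlog, ← heq, ellIncr, if_pos rfl])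
  · exact h j (by omega) (by rw [eq_div_iff hlog, ← heq, ellIncr, if_neg hj])

theorem exists_forall_ellIncr_lt_mul_log_iff (ρ : ℝ) :
    ∃ α : ℕ → ℕ, ∀ p : ℕ, p.Prime → ∀ j, ellIncr p j < ρ * log p ↔ j < α p := by
  have h : ∀ p : ℕ, ∃ α, p.Prime → ∀ j, ellIncr p j < ρ * log p ↔ j < α := fun p => by
    by_cases hp : p.Prime
    · have hp2 : (2 : ℝ) ≤ p := by exact_mod_cast hp.two_le
      obtain ⟨α, hα⟩ := (monotone_ellIncr hp2).exists_lt_iff_lt (exists_le_ellIncr hp2 _)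
      exact ⟨α, fun _ => hα⟩
    · exact ⟨0, fun h => absurd h hp⟩
  choose α hα using h
  exact ⟨α, hα⟩

noncomputable def localCost (ρ : ℝ) (p a : ℕ) : ℝ := ∑ j ∈ range a, (ellIncr p j - ρ * log p)

theorem localCost_of_ne_zero (ρ : ℝ) (p : ℕ) {a : ℕ} (ha : a ≠ 0) :
    localCost ρ p a = p ^ a - ρ * (a * log p) := by
  rw [localCost, sum_sub_distrib, sum_range_ellIncr _ ha, sum_const, card_range, nsmul_eq_mul]
  ring

theorem ell_sub_mul_log_eq_sum (ρ : ℝ) {M : ℕ} {S : Finset ℕ} (hS : M.primeFactors ⊆ S) :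
    (ell M : ℝ) - ρ * log M = ∑ p ∈ S, localCost ρ p (M.factorization p) := by
  have hzero : ∀ p ∈ S, p ∉ M.primeFactors → localCost ρ p (M.factorization p) = 0 :=
    fun p _ hp => by rw [Finsupp.notMem_support_iff.1 (M.support_factorization ▸ hp)]; rfl
  rw [← sum_subset hS hzero, ell, log_nat_eq_sum_factorization, Finsupp.sum,
    Nat.support_factorization, mul_sum, Nat.cast_sum, ← sum_sub_distrib]
  refine sum_congr rfl fun p hp => ?_
  rw [localCost_of_ne_zero ρ p (Finsupp.mem_support_iff.1 (M.support_factorization ▸ hp))]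
  push_cast; rfl

theorem localCost_lt_localCost {ρ : ℝ} {p α : ℕ} (hα : ∀ j, ellIncr p j < ρ * log p ↔ j < α)
    (hne : ∀ j, ellIncr p j ≠ ρ * log p) {a : ℕ} (ha : a ≠ α) :
    localCost ρ p α < localCost ρ p a := by
  refine sum_range_lt_sum_range_of_neg_of_pos (fun j hj => sub_neg.2 ((hα j).2 hj))
    (fun j hj => sub_pos.2 ?_) ha
  exact (not_lt.1 fun h => (not_lt.2 hj) ((hα j).1 h)).lt_of_ne' (hne j)

theorem unique_superchampion_general (ρ : ℝ)
    (hE : ∀ p : ℕ, p.Prime → ρ ≠ (p : ℝ) / Real.log p ∧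
      ∀ i : ℕ, 1 ≤ i → ρ ≠ ((p : ℝ) ^ (i + 1) - (p : ℝ) ^ i) / Real.log p) :
    ∃ N : ℕ, 0 < N ∧
      (∀ M : ℕ, 0 < M →
        (ell N : ℝ) - ρ * Real.log N ≤ (ell M : ℝ) - ρ * Real.log M) ∧
      (∀ M : ℕ, 0 < M →
        (∀ K : ℕ, 0 < K →
          (ell M : ℝ) - ρ * Real.log M ≤ (ell K : ℝ) - ρ * Real.log K) → M = N) ∧
      (∀ p : ℕ, p.Prime →
        (1 ≤ N.factorization p ↔ (p : ℝ) / Real.log p < ρ) ∧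
        (∀ i : ℕ, 2 ≤ i →
          (i ≤ N.factorization p ↔
            ((p : ℝ) ^ i - (p : ℝ) ^ (i - 1)) / Real.log p < ρ))) := by
  obtain ⟨α, hα⟩ := exists_forall_ellIncr_lt_mul_log_iff ρ
  have hfin : {p | p.Prime ∧ α p ≠ 0}.Finite := (finite_setOf_lt_mul_log ρ).subset
    fun p ⟨hp, h0⟩ => by simpa [ellIncr] using (hα p hp 0).2 (Nat.pos_of_ne_zero h0)
  obtain ⟨N, hN, hNα⟩ := Nat.exists_factorization_eq hfin
  have hlt : ∀ M, M ≠ 0 → M ≠ N →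
      (ell N : ℝ) - ρ * log N < (ell M : ℝ) - ρ * log M := fun M hM hMN => by
    rw [ell_sub_mul_log_eq_sum ρ (subset_union_right (s₁ := M.primeFactors)),
      ell_sub_mul_log_eq_sum ρ subset_union_left]
    refine sum_lt_sum_of_factorization_ne hM hN hMN fun p hp a ha => ?_
    rw [hNα p hp] at ha ⊢
    exact localCost_lt_localCost (hα p hp) (ellIncr_ne_mul_log hp (hE p hp).1 (hE p hp).2) ha
  have hexp : ∀ p : ℕ, p.Prime → ∀ i, 1 ≤ i →
      (i ≤ N.factorization p ↔ ellIncr p (i - 1) / log p < ρ) := fun p hp i hi => by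
    rw [div_lt_iff₀ (log_pos (by exact_mod_cast hp.one_lt)), hα p hp, hNα p hp]
    omega
  refine ⟨N, Nat.pos_of_ne_zero hN, fun M hM => ?_, fun M hM hmin => ?_, fun p hp => ?_⟩
  · rcases eq_or_ne M N with rfl | h
    exacts [le_rfl, (hlt M hM.ne' h).le]
  · by_contra h
    exact (hlt M hM.ne' h).not_ge (hmin N (Nat.pos_of_ne_zero hN))
  · refine ⟨by simpa [ellIncr] using hexp p hp 1 le_rfl, fun i hi => ?_⟩
    rw [hexp p hp i (by omega), ellIncr, if_neg (by omega), Nat.sub_add_cancel (by omega)]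

theorem unique_superchampion (ρ : ℝ) (hρ : 0 < ρ)
    (hE : ∀ p : ℕ, p.Prime → ρ ≠ (p : ℝ) / Real.log p ∧
      ∀ i : ℕ, 1 ≤ i → ρ ≠ ((p : ℝ) ^ (i + 1) - (p : ℝ) ^ i) / Real.log p) :
    ∃ N : ℕ, 0 < N ∧
      (∀ M : ℕ, 0 < M →
        (ell N : ℝ) - ρ * Real.log N ≤ (ell M : ℝ) - ρ * Real.log M) ∧
      (∀ M : ℕ, 0 < M →
        (∀ K : ℕ, 0 < K →
          (ell M : ℝ) - ρ * Real.log M ≤ (ell K : ℝ) - ρ * Real.log K) → M = N) ∧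
      (∀ p : ℕ, p.Prime →
        (1 ≤ N.factorization p ↔ (p : ℝ) / Real.log p < ρ) ∧
        (∀ i : ℕ, 2 ≤ i →
          (i ≤ N.factorization p ↔
            ((p : ℝ) ^ i - (p : ℝ) ^ (i - 1)) / Real.log p < ρ))) :=
  unique_superchampion_general ρ hE
end

section
/- Fix ρ ∈ E (so that N = N_ρ is an ℓ-superchampion associated to ρ), let α_p = v_p(N), and let p be a prime and γ ≥ 0 an integer. Then ben(p^γ N) = ℓ(p^{γ+α_p}) − ℓ(p^{α_p}) − ργ log p is nondecreasing in γ and tends to infinity with γ. -/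
/-- The benefit of M with respect to the superchampion N associated to ρ. -/
noncomputable def ben (ρ : ℝ) (N M : ℕ) : ℝ :=
  (ell M : ℝ) - (ell N : ℝ) - ρ * (Real.log M - Real.log N)

open Filter

lemma ell_mul_of_coprime {a b : ℕ} (hab : a.Coprime b) : ell (a * b) = ell a + ell b := by
  have hfac {m n q : ℕ} (hq : q ∉ n.primeFactors) : (m.factorization + n.factorization) q =
      m.factorization q := by
    simp [Finsupp.notMem_support_iff.1 (Nat.support_factorization n ▸ hq)]
  unfold ell
  rw [hab.primeFactors_mul, Finset.sum_union hab.disjoint_primeFactors,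
    Nat.factorization_mul_of_coprime hab]
  congr 1 <;> refine Finset.sum_congr rfl fun q hq => ?_
  · rw [hfac (hab.disjoint_primeFactors.notMem_of_mem_left_finset hq)]
  · rw [add_comm, hfac (hab.disjoint_primeFactors.notMem_of_mem_right_finset hq)]

lemma ell_prime_pow {p : ℕ} (hp : p.Prime) {k : ℕ} (hk : k ≠ 0) : ell (p ^ k) = p ^ k := by
  simp [ell, Nat.primeFactors_prime_pow hk hp, hp.factorization_pow]

lemma ell_prime_pow_mul {p N : ℕ} (hp : p.Prime) (hN : N ≠ 0) (γ : ℕ) :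
    ell (p ^ γ * N) = ell (p ^ (γ + N.factorization p)) + ell (ordCompl[p] N) := by
  have hcop : (p ^ (γ + N.factorization p)).Coprime (ordCompl[p] N) :=
    (Nat.coprime_ordCompl hp hN).pow_left _
  rw [← ell_mul_of_coprime hcop, pow_add, mul_assoc, Nat.ordProj_mul_ordCompl_eq_self]

lemma monotone_ell_prime_pow_succ_sub {p : ℕ} (hp : p.Prime) :
    Monotone fun k : ℕ => (ell (p ^ (k + 1)) : ℝ) - ell (p ^ k) := by
  have hp2 : (2 : ℝ) ≤ p := by exact_mod_cast hp.two_le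
  refine monotone_nat_of_le_succ fun k => ?_
  simp only [ell_prime_pow hp (Nat.succ_ne_zero _)]
  rcases Nat.eq_zero_or_pos k with rfl | hk
  · simp [ell]
    nlinarith
  · rw [ell_prime_pow hp hk.ne']
    push_cast
    rw [pow_succ _ (k + 1), pow_succ]
    nlinarith [mul_nonneg (pow_nonneg (by positivity : (0 : ℝ) ≤ p) k) (sq_nonneg ((p : ℝ) - 1))]

lemma tendsto_pow_sub_mul_atTop {r : ℝ} (hr : 1 < r) (c : ℝ) :
    Tendsto (fun n : ℕ => r ^ n - c * n) atTop atTop := by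
  have hsmall : Tendsto (fun n : ℕ => 1 - c * (n / r ^ n)) atTop (nhds 1) := by
    simpa using ((tendsto_pow_const_div_const_pow_of_one_lt 1 hr).const_mul c).const_sub 1
  refine ((tendsto_pow_atTop_atTop_of_one_lt hr).atTop_mul_pos one_pos hsmall).congr fun n => ?_
  have : r ^ n ≠ 0 := by positivity
  field_simp

lemma log_prime_pow_mul {p N : ℕ} (hp : p.Prime) (hN : N ≠ 0) (γ : ℕ) :
    Real.log ((p ^ γ * N : ℕ) : ℝ) = γ * Real.log p + Real.log N := by
  have : (p : ℝ) ≠ 0 := by exact_mod_cast hp.ne_zero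
  push_cast
  rw [Real.log_mul (by positivity) (by exact_mod_cast hN), Real.log_pow]

lemma ben_prime_pow_mul {ρ : ℝ} {p N : ℕ} (hp : p.Prime) (hN : N ≠ 0) (γ : ℕ) :
    ben ρ N (p ^ γ * N) = (ell (p ^ (γ + N.factorization p)) : ℝ) -
      ell (p ^ N.factorization p) - ρ * γ * Real.log p := by
  have hell := ell_prime_pow_mul hp hN γ
  have hell₀ := ell_prime_pow_mul hp hN 0
  rw [pow_zero, one_mul, zero_add] at hell₀
  rw [ben, log_prime_pow_mul hp hN, hell, hell₀]
  push_cast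
  ring

theorem ben_mul_pow_monotone (ρ : ℝ) (N : ℕ) (hN : 0 < N)
    (hsc : ∀ M : ℕ, 0 < M →
      (ell N : ℝ) - ρ * Real.log N ≤ (ell M : ℝ) - ρ * Real.log M)
    (p : ℕ) (hp : p.Prime) :
    (∀ γ : ℕ, ben ρ N (p ^ γ * N) =
      (ell (p ^ (γ + N.factorization p)) : ℝ) - (ell (p ^ N.factorization p) : ℝ)
        - ρ * (γ : ℝ) * Real.log p) ∧
    Monotone (fun γ : ℕ => ben ρ N (p ^ γ * N)) ∧
    Filter.Tendsto (fun γ : ℕ => ben ρ N (p ^ γ * N)) Filter.atTop Filter.atTop := by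
  have hformula := ben_prime_pow_mul (ρ := ρ) hp hN.ne'
  set α := N.factorization p
  have hben_pN : 0 ≤ ben ρ N (p ^ 1 * N) := by
    have := hsc (p ^ 1 * N) (Nat.mul_pos (pow_pos hp.pos 1) hN)
    rw [ben]
    linarith
  refine ⟨hformula, monotone_nat_of_le_succ fun γ => ?_, ?_⟩
  · have hincr := monotone_ell_prime_pow_succ_sub hp (Nat.le_add_left α γ)
    rw [hformula, add_comm 1 α] at hben_pN
    rw [hformula, hformula, show γ + 1 + α = γ + α + 1 by omega]
    push_cast at hben_pN ⊢
    linarith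
  · have hp1 : (1 : ℝ) < p := by exact_mod_cast hp.one_lt
    refine tendsto_atTop_mono' _ ?_ (tendsto_atTop_add_const_right _ (-(ell (p ^ α) : ℝ))
      (tendsto_pow_sub_mul_atTop hp1 (ρ * Real.log p)))
    filter_upwards [eventually_ne_atTop 0] with γ hγ
    have hpow : (p : ℝ) ^ γ ≤ p ^ (γ + α) := pow_le_pow_right₀ hp1.le (Nat.le_add_right _ _)
    rw [hformula, ell_prime_pow hp (by omega : γ + α ≠ 0)]
    push_cast
    linarith [show ρ * γ * Real.log p = ρ * Real.log p * γ by ring]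
end

section
/- Let k ≥ 3 and p_{k+1} − p_k ≤ m ≤ p_{k+1} − 3, and let q be the smallest prime with q ≥ p_{k+1} − m. Then p_{k+1}/q ≤ G(p_k, m) ≤ p_{k+1}/(p_{k+1} − m). -/
/-- A real number F is an admissible fraction for G(p_k, m): it is of the form
(Q₁⋯Q_s)/(q₁⋯q_s) with primes 3 ≤ q_s < ⋯ < q₁ ≤ p_k < p_{k+1} ≤ Q₁ < ⋯ < Q_s
and Σ (Q_i − q_i) ≤ m. -/
def GAdmissible (pk m : ℕ) (F : ℝ) : Prop :=
  ∃ (s : ℕ) (Q q : Fin s → ℕ),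
    (∀ i, (Q i).Prime) ∧ (∀ i, (q i).Prime) ∧
    StrictMono Q ∧ StrictMono q ∧
    (∀ i, 3 ≤ q i) ∧ (∀ i, q i ≤ pk) ∧ (∀ i, pk < Q i) ∧
    (∑ i, (Q i - q i)) ≤ m ∧
    F = (∏ i, (Q i : ℝ)) / (∏ i, (q i : ℝ))

/-- Weierstrass product inequality. -/
lemma weierstrass {ι : Type*} (s : Finset ι) (f : ι → ℝ)
    (h0 : ∀ i ∈ s, 0 ≤ f i) (h1 : ∀ i ∈ s, f i ≤ 1) :
    1 - ∑ i ∈ s, f i ≤ ∏ i ∈ s, (1 - f i) := by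
  classical
  induction s using Finset.induction_on with
  | empty => simp
  | @insert a s ha ih =>
    rw [Finset.prod_insert ha, Finset.sum_insert ha]
    have h0a := h0 a (Finset.mem_insert_self a s)
    have h1a := h1 a (Finset.mem_insert_self a s)
    have ih' := ih (fun i hi => h0 i (Finset.mem_insert_of_mem hi))
      (fun i hi => h1 i (Finset.mem_insert_of_mem hi))
    have hsum : 0 ≤ ∑ i ∈ s, f i :=
      Finset.sum_nonneg fun i hi => h0 i (Finset.mem_insert_of_mem hi)
    nlinarith [mul_le_mul_of_nonneg_left ih' (by linarith : (0:ℝ) ≤ 1 - f a)]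

theorem G_bounds (k m q : ℕ) (hk : 2 ≤ k)
    (hm₁ : Nat.nth Nat.Prime (k + 1) - Nat.nth Nat.Prime k ≤ m)
    (hm₂ : m ≤ Nat.nth Nat.Prime (k + 1) - 3)
    (hq : q.Prime) (hq₁ : Nat.nth Nat.Prime (k + 1) - m ≤ q)
    (hqmin : ∀ r : ℕ, r.Prime → Nat.nth Nat.Prime (k + 1) - m ≤ r → q ≤ r) :
    (Nat.nth Nat.Prime (k + 1) : ℝ) / (q : ℝ) ≤
        sSup {F : ℝ | GAdmissible (Nat.nth Nat.Prime k) m F} ∧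
    sSup {F : ℝ | GAdmissible (Nat.nth Nat.Prime k) m F} ≤
        (Nat.nth Nat.Prime (k + 1) : ℝ) / ((Nat.nth Nat.Prime (k + 1) : ℝ) - (m : ℝ)) := by
  classical
  have hinf := Nat.infinite_setOf_prime
  set p := Nat.nth Nat.Prime k with hp
  set P := Nat.nth Nat.Prime (k + 1) with hP
  have hPprime : P.Prime := Nat.prime_nth_prime _
  have hpprime : p.Prime := Nat.prime_nth_prime _
  have hpP : p < P := (Nat.nth_lt_nth hinf).2 (lt_add_one k)
  have h3P : 3 ≤ P := by have := hpprime.two_le; omega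
  have hm3 : m + 3 ≤ P := by omega
  have hq_le_p : q ≤ p := hqmin p hpprime (by omega)
  have hq3 : 3 ≤ q := by
    have := hq₁; omega
  -- Key upper bound
  have key : ∀ F ∈ {F : ℝ | GAdmissible p m F}, F ≤ (P : ℝ) / ((P : ℝ) - m) := by
    rintro F ⟨s, Q, qq, hQp, hqp, _, _, hq3', hqpk, hpkQ, hsum, rfl⟩
    have hPmpos : (0 : ℝ) < (P : ℝ) - m := by
      have : (m : ℝ) + 3 ≤ P := by exact_mod_cast hm3
      linarith
    match s with
    | 0 =>
      simp only [Finset.univ_eq_empty, Finset.prod_empty]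
      rw [div_le_div_iff₀ one_pos hPmpos]
      have : (0 : ℝ) ≤ (m : ℝ) := Nat.cast_nonneg m
      linarith
    | Nat.succ n =>
      have hQ0P : P ≤ Q 0 := by
        have hc : Q 0 = Nat.nth Nat.Prime (Nat.count Nat.Prime (Q 0)) :=
          (Nat.nth_count (hQp 0)).symm
        have hk' : k < Nat.count Nat.Prime (Q 0) := by
          apply (Nat.nth_lt_nth hinf).1
          rw [← hc]; exact hpkQ 0
        calc P ≤ Nat.nth Nat.Prime (Nat.count Nat.Prime (Q 0)) :=
              Nat.nth_monotone hinf hk'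
          _ = Q 0 := hc.symm
      have hdle : ∀ i, Q i - qq i ≤ m := fun i =>
        le_trans (Finset.single_le_sum (f := fun j => Q j - qq j) (fun j _ => Nat.zero_le _) (Finset.mem_univ i)) hsum
      have hqQ : ∀ i, qq i < Q i := fun i => lt_of_le_of_lt (hqpk i) (hpkQ i)
      set Q0 : ℝ := (Q 0 : ℝ) with hQ0
      have hQ0pos : (0 : ℝ) < Q0 := by
        have := (hQp 0).two_le
        simp only [hQ0]; exact_mod_cast Nat.lt_of_lt_of_le (by norm_num) this
      have hPQ0 : (P : ℝ) ≤ Q0 := by rw [hQ0]; exact_mod_cast hQ0P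
      set f : Fin (n + 1) → ℝ := fun i => ((Q i - qq i : ℕ) : ℝ) / Q0 with hf
      have hf0 : ∀ i, 0 ≤ f i := fun i => div_nonneg (Nat.cast_nonneg _) hQ0pos.le
      have hdm : ∀ i, ((Q i - qq i : ℕ) : ℝ) ≤ m := fun i => by exact_mod_cast hdle i
      have hf1 : ∀ i, f i ≤ 1 := fun i => by
        rw [hf, div_le_one hQ0pos]
        have := hdm i
        linarith [hPmpos, hPQ0]
      have hfden : ∀ i, 0 < 1 - f i := fun i => by
        rw [hf]
        have h1 : ((Q i - qq i : ℕ) : ℝ) / Q0 < 1 := by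
          rw [div_lt_one hQ0pos]
          have := hdm i; linarith
        linarith
      have hqcast : ∀ i, (qq i : ℝ) = (Q i : ℝ) - ((Q i - qq i : ℕ) : ℝ) := fun i => by
        rw [Nat.cast_sub (hqQ i).le]; ring
      have hqpos : ∀ i, (0 : ℝ) < qq i := fun i => by
        have := hq3' i
        exact_mod_cast Nat.lt_of_lt_of_le (by norm_num) this
      -- Step A
      have stepA : (∏ i, (Q i : ℝ)) / (∏ i, (qq i : ℝ)) ≤ ∏ i, (1 - f i)⁻¹ := by
        rw [← Finset.prod_div_distrib]
        apply Finset.prod_le_prod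
        · intro i _; exact div_nonneg (Nat.cast_nonneg _) (hqpos i).le
        · intro i _
          have h1f : 1 - f i = (Q0 - ((Q i - qq i : ℕ) : ℝ)) / Q0 := by
            rw [hf]; field_simp
          rw [h1f, inv_div]
          rw [div_le_div_iff₀ (hqpos i) (by have := hdm i; linarith)]
          have hQiQ0 : Q0 ≤ (Q i : ℝ) := by
            simp only [hQ0]
            exact_mod_cast Nat.cast_le.2 ((StrictMono.le_iff_le (by assumption)).2 (Fin.zero_le i))
          have hdnn : (0 : ℝ) ≤ ((Q i - qq i : ℕ) : ℝ) := Nat.cast_nonneg _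
          rw [hqcast i]
          nlinarith
      -- Step B
      have hS : ∑ i, f i = (∑ i, ((Q i - qq i : ℕ) : ℝ)) / Q0 := by
        rw [hf, ← Finset.sum_div]
      have hSm : ∑ i, ((Q i - qq i : ℕ) : ℝ) ≤ m := by
        have : ((∑ i, (Q i - qq i) : ℕ) : ℝ) ≤ m := by exact_mod_cast hsum
        rwa [Nat.cast_sum] at this
      have hSnn : (0 : ℝ) ≤ ∑ i, ((Q i - qq i : ℕ) : ℝ) :=
        Finset.sum_nonneg fun i _ => Nat.cast_nonneg _
      have hw := weierstrass Finset.univ f (fun i _ => hf0 i) (fun i _ => hf1 i)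
      have hprodpos : 0 < ∏ i, (1 - f i) :=
        Finset.prod_pos fun i _ => hfden i
      have h1S : 0 < 1 - ∑ i, f i := by
        rw [hS, sub_pos, div_lt_one hQ0pos]
        linarith
      have stepB : ∏ i, (1 - f i)⁻¹ ≤ (1 - ∑ i, f i)⁻¹ := by
        rw [Finset.prod_inv_distrib]
        exact inv_anti₀ h1S hw
      -- Step C
      have stepC : (1 - ∑ i, f i)⁻¹ ≤ (P : ℝ) / ((P : ℝ) - m) := by
        have h1Seq : 1 - ∑ i, f i = (Q0 - ∑ i, ((Q i - qq i : ℕ) : ℝ)) / Q0 := by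
          rw [hS]; field_simp
        rw [h1Seq, inv_div]
        rw [div_le_div_iff₀ (by nlinarith [h1S, h1Seq]) hPmpos]
        nlinarith [hPQ0, hSm, hSnn, hPmpos, hQ0pos]
      calc (∏ i, (Q i : ℝ)) / (∏ i, (qq i : ℝ)) ≤ ∏ i, (1 - f i)⁻¹ := stepA
        _ ≤ (1 - ∑ i, f i)⁻¹ := stepB
        _ ≤ (P : ℝ) / ((P : ℝ) - m) := stepC
  -- membership of P / q
  have hmem : (P : ℝ) / q ∈ {F : ℝ | GAdmissible p m F} := by
    refine ⟨1, fun _ => P, fun _ => q, fun _ => hPprime, fun _ => hq, ?_, ?_,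
      fun _ => hq3, fun _ => hq_le_p, fun _ => hpP, ?_, ?_⟩
    · exact Subsingleton.strictMono _
    · exact Subsingleton.strictMono _
    · rw [Fin.sum_univ_one]; show P - q ≤ m; omega
    · rw [Fin.prod_univ_one, Fin.prod_univ_one]
  have hbdd : BddAbove {F : ℝ | GAdmissible p m F} := ⟨_, key⟩
  exact ⟨le_csSup hbdd hmem, csSup_le ⟨_, hmem⟩ key⟩
end
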